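/- Let λ > 1 and let E₁, …, E_N (N ≥ 2) be μ-measurable subsets of X such that min_{1 ≤ j ≤ N} μ(E_j ∩ B)/μ(B) ≤ c_D^{−4λ} for every ball B ⊂ X. Then μ(⋂_{j=1}^{N} E_j) = 0. -/

import Mathlib

open MeasureTheory Metric ENNReal

section Defs

variable {X : Type*} [MetricSpace X] [MeasurableSpace X]

/-- The doubling condition from the paper: `μ` is nontrivial and finite on balls, and
`μ(B(x,2r)) ≤ c_D μ(B(y,r))` whenever `B(x,2r) ∩ B(y,r) ≠ ∅`. -/
def IsDoublingWith (μ : Measure X) (cD : ℝ) : Prop :=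
  1 < cD ∧
  (∀ (x : X) (r : ℝ), 0 < r → 0 < μ (ball x r) ∧ μ (ball x r) < ⊤) ∧
  ∀ (x y : X) (r : ℝ), 0 < r → (ball x (2 * r) ∩ ball y r).Nonempty →
    μ (ball x (2 * r)) ≤ ENNReal.ofReal cD * μ (ball y r)

/-- Mean oscillation of `f` over the ball `B(x,r)`: `⨍_B |f - f_B| dμ`. -/
noncomputable def avgOsc (μ : Measure X) (f : X → ℝ) (x : X) (r : ℝ) : ℝ :=
  ⨍ y in ball x r, |f y - ⨍ z in ball x r, f z ∂μ| ∂μ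

/-- The set of mean oscillations of `f` over all balls. -/
def bmoSet (μ : Measure X) (f : X → ℝ) : Set ℝ :=
  {a | ∃ x r, 0 < r ∧ a = avgOsc μ f x r}

/-- `f ∈ BMO(X)`: locally integrable with uniformly bounded mean oscillations. -/
def MemBMO (μ : Measure X) (f : X → ℝ) : Prop :=
  LocallyIntegrable f μ ∧ BddAbove (bmoSet μ f)

/-- The BMO seminorm `‖f‖_* = sup_B ⨍_B |f - f_B| dμ`. -/
noncomputable def bmoNorm (μ : Measure X) (f : X → ℝ) : ℝ :=
  sSup (bmoSet μ f)

end Defs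


/-!
A doubling space carries disjoint balls of a fixed radius only countably often (each has
positive measure, and the measure is σ-finite), so it is second countable and Lebesgue's density
theorem applies: almost every point of `⋂ j, E j` has density `1` in it. But the hypothesis at
scale `2r`, followed by one doubling step, bounds the density of `⋂ j, E j` in every ball of
radius `r` by `c_D ^ (1 - 4λ) < 1`.
-/

open Filter Topology

namespace IsDoublingWith

variable {X : Type*} [MetricSpace X] [MeasurableSpace X] {μ : Measure X} {cD : ℝ}

lemma measure_ball_two_mul_le (hμ : IsDoublingWith μ cD) (x : X) {r : ℝ} (hr : 0 < r) :
    μ (ball x (2 * r)) ≤ ENNReal.ofReal cD * μ (ball x r) :=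
  hμ.2.2 x x r hr ⟨x, mem_ball_self (by linarith), mem_ball_self hr⟩

lemma measure_inter_closedBall_le (hμ : IsDoublingWith μ cD) {E : Set X} {a : ℝ≥0∞} (x : X)
    {r : ℝ} (hr : 0 < r) (hE : μ (E ∩ ball x (2 * r)) / μ (ball x (2 * r)) ≤ a) :
    μ (E ∩ closedBall x r) ≤ a * ENNReal.ofReal cD * μ (closedBall x r) := by
  have h2r := hμ.2.1 x (2 * r) (by positivity)
  calc μ (E ∩ closedBall x r) ≤ μ (E ∩ ball x (2 * r)) :=
        measure_mono (Set.inter_subset_inter_right E (closedBall_subset_ball (by linarith)))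
    _ ≤ a * μ (ball x (2 * r)) := (ENNReal.div_le_iff h2r.1.ne' h2r.2.ne).1 hE
    _ ≤ a * (ENNReal.ofReal cD * μ (ball x r)) := by
        gcongr; exact hμ.measure_ball_two_mul_le x hr
    _ ≤ a * ENNReal.ofReal cD * μ (closedBall x r) := by
        rw [← mul_assoc]; gcongr; exact ball_subset_closedBall

lemma isUnifLocDoublingMeasure (hμ : IsDoublingWith μ cD) : IsUnifLocDoublingMeasure μ := by
  refine ⟨⟨cD.toNNReal ^ 2, ?_⟩⟩
  filter_upwards [self_mem_nhdsWithin] with ε (hε : 0 < ε)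
  intro x
  calc μ (closedBall x (2 * ε)) ≤ μ (ball x (2 * (2 * ε))) :=
        measure_mono (closedBall_subset_ball (by linarith))
    _ ≤ ENNReal.ofReal cD * (ENNReal.ofReal cD * μ (ball x ε)) :=
        (hμ.measure_ball_two_mul_le x (by positivity)).trans
          (mul_le_mul_right (hμ.measure_ball_two_mul_le x hε) _)
    _ ≤ ENNReal.ofReal cD * (ENNReal.ofReal cD * μ (closedBall x ε)) := by
        gcongr; exact ball_subset_closedBall
    _ = ((cD.toNNReal ^ 2 : NNReal) : ℝ≥0∞) * μ (closedBall x ε) := by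
        rw [ENNReal.coe_pow, ← mul_assoc, sq]; rfl

lemma isLocallyFiniteMeasure (hμ : IsDoublingWith μ cD) : IsLocallyFiniteMeasure μ :=
  ⟨fun x => ⟨ball x 1, ball_mem_nhds x one_pos, (hμ.2.1 x 1 one_pos).2⟩⟩

lemma sigmaFinite (hμ : IsDoublingWith μ cD) : SigmaFinite μ := by
  rcases isEmpty_or_nonempty X with hX | ⟨⟨x₀⟩⟩
  · exact ⟨⟨⟨fun _ => ∅, fun _ => trivial, by simp,
      by rw [Set.iUnion_empty, Set.univ_eq_empty_iff.2 hX]⟩⟩⟩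
  · exact ⟨⟨⟨fun n : ℕ => ball x₀ (n + 1), fun _ => trivial,
      fun n => (hμ.2.1 x₀ _ n.cast_add_one_pos).2, iUnion_ball_nat_succ x₀⟩⟩⟩

lemma countable_of_pairwiseDisjoint_ball [OpensMeasurableSpace X] (hμ : IsDoublingWith μ cD)
    {s : Set X} {ε : ℝ} (hε : 0 < ε) (hs : s.PairwiseDisjoint fun y => ball y ε) :
    s.Countable := by
  have := hμ.sigmaFinite
  have hpos := Measure.countable_meas_pos_of_disjoint_iUnion (μ := μ)
    (As := fun y : s => ball (y : X) ε) (fun _ => measurableSet_ball)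
    (fun y z hyz => hs y.2 z.2 (Subtype.coe_ne_coe.2 hyz))
  have huniv : {y : s | 0 < μ (ball (y : X) ε)} = Set.univ :=
    Set.eq_univ_of_forall fun y => (hμ.2.1 y ε hε).1
  rw [huniv, Set.countable_univ_iff] at hpos
  exact Set.countable_coe_iff.1 hpos

/-- The centres of a maximal family of disjoint balls of radius `ε / 4` (Vitali) form a
countable `ε`-net. -/
lemma secondCountableTopology [OpensMeasurableSpace X] (hμ : IsDoublingWith μ cD) :
    SecondCountableTopology X := by
  refine Metric.secondCountable_of_almost_dense_set fun ε hε => ?_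
  obtain ⟨s, -, hdisj, hcover⟩ := Vitali.exists_disjoint_subfamily_covering_enlargement_ball
    (Set.univ : Set X) id (fun _ => ε / 4) (ε / 4) (fun _ _ => le_rfl) 4 (by norm_num)
  refine ⟨s, hμ.countable_of_pairwiseDisjoint_ball (by positivity) hdisj, fun x => ?_⟩
  obtain ⟨y, hy, hxy⟩ := hcover x (Set.mem_univ x)
  refine ⟨y, hy, le_of_lt ?_⟩
  simpa [mem_ball, mul_div_cancel₀] using hxy (mem_ball_self (by positivity))

end IsDoublingWith

theorem measure_eq_zero_of_eventually_measure_inter_closedBall_le {α : Type*}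
    [PseudoMetricSpace α] [MeasurableSpace α] [SecondCountableTopology α] [BorelSpace α]
    {μ : Measure α} [IsLocallyFiniteMeasure μ] [IsUnifLocDoublingMeasure μ] {S : Set α}
    {c : ℝ≥0∞} (hc : c < 1)
    (h : ∀ x, ∀ᶠ r in 𝓝[>] 0, μ (S ∩ closedBall x r) ≤ c * μ (closedBall x r)) :
    μ S = 0 := by
  by_contra hS
  have : (ae (μ.restrict S)).NeBot := ae_neBot.2 (by rwa [Ne, Measure.restrict_eq_zero])
  obtain ⟨x, hx⟩ := (IsUnifLocDoublingMeasure.ae_tendsto_measure_inter_div μ S 1).exists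
  have hdensity := hx (fun _ => x) id tendsto_id
    (eventually_mem_nhdsWithin.mono fun r (hr : 0 < r) => by simp [hr.le])
  have : ∀ᶠ r in 𝓝[>] (0 : ℝ), μ (S ∩ closedBall x r) / μ (closedBall x r) ≤ c :=
    (h x).mono fun r hr => ENNReal.div_le_of_le_mul hr
  exact (le_of_tendsto hdensity this).not_gt hc

theorem inter_null_general {X : Type*} [MetricSpace X] [MeasurableSpace X]
    [BorelSpace X] (μ : Measure X) (cD : ℝ) (hμ : IsDoublingWith μ cD)
    (N : ℕ) (lam : ℝ) (hlam : 1 < lam)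
    (E : Fin N → Set X)
    (h : ∀ (x : X) (r : ℝ), 0 < r →
      ∃ j, μ (E j ∩ ball x r) / μ (ball x r) ≤ ENNReal.ofReal (cD ^ (-(4 * lam)))) :
    μ (⋂ j, E j) = 0 := by
  have hcD : 0 < cD := zero_lt_one.trans hμ.1
  have := hμ.secondCountableTopology
  have := hμ.isLocallyFiniteMeasure
  have := hμ.isUnifLocDoublingMeasure
  have hdensity : ENNReal.ofReal (cD ^ (-(4 * lam))) * ENNReal.ofReal cD < 1 := by
    rw [← ENNReal.ofReal_mul (Real.rpow_nonneg hcD.le _), ENNReal.ofReal_lt_one,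
      ← Real.rpow_add_one hcD.ne']
    exact Real.rpow_lt_one_of_one_lt_of_neg hμ.1 (by linarith)
  refine measure_eq_zero_of_eventually_measure_inter_closedBall_le hdensity fun x => ?_
  filter_upwards [self_mem_nhdsWithin] with r (hr : 0 < r)
  obtain ⟨j, hj⟩ := h x (2 * r) (by positivity)
  exact (measure_mono (Set.inter_subset_inter_left _ (Set.iInter_subset E j))).trans
    (hμ.measure_inter_closedBall_le x hr hj)

/-- under the hypothesis of Uchiyama's construction, the sets
`E₁, …, E_N` have a null intersection. -/
theorem inter_null {X : Type*} [MetricSpace X] [CompleteSpace X] [MeasurableSpace X]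
    [BorelSpace X] (μ : Measure X) (cD : ℝ) (hμ : IsDoublingWith μ cD)
    (N : ℕ) (hN : 2 ≤ N) (lam : ℝ) (hlam : 1 < lam)
    (E : Fin N → Set X) (hE : ∀ j, MeasurableSet (E j))
    (h : ∀ (x : X) (r : ℝ), 0 < r →
      ∃ j, μ (E j ∩ ball x r) / μ (ball x r) ≤ ENNReal.ofReal (cD ^ (-(4 * lam)))) :
    μ (⋂ j, E j) = 0 :=
  inter_null_general μ cD hμ N lam hlam E h
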